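/- Fix an integer d ≥ 1, T > 0, 0 ≤ t₁ ≤ t₂ ≤ T, and a function f : [0,T] × {1,…,d} → ℝ such that for each i the function s ↦ f(s,i) is continuous on [0,T] and of bounded variation on [t₁,t₂]. Then for all μ, ν ∈ 𝕄_T with kernels K_μ, K_ν and every i ∈ {1,…,d}: | ∫_{t₁}^{t₂} f(s,i) (K_μ(s,i) − K_ν(s,i)) ds | ≤ ( |f(t₁,i)| + |f(t₂,i)| + TV(f(·,i); [t₁,t₂]) ) · d_T(μ,ν), where TV(f(·,i); [t₁,t₂]) denotes the total variation of s ↦ f(s,i) over [t₁,t₂]. -/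

import Mathlib

open MeasureTheory

/-- A kernel on `[0,T] × {1,…,d}`. -/
def IsMKernel (d : ℕ) (T : ℝ) (K : ℝ → Fin d → ℝ) : Prop :=
  (∀ i : Fin d, Measurable fun s => K s i) ∧
    ∀ s ∈ Set.Icc (0:ℝ) T, (∀ i : Fin d, 0 ≤ K s i) ∧ ∑ i : Fin d, K s i = 1

open Set

/-!
Put `h = K_μ(·,i) - K_ν(·,i)`: its primitive `G = μ(·,i) - ν(·,i)` is bounded by `d_T(μ,ν)`,
and the estimate is the integration by parts `∫ g h = [g G]_{t₁}^{t₂} - ∫ G dg` together with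
`|∫ G dg| ≤ TV(g) · sup |G|`. Writing `g = p - q` with `p, q` monotone of total increase
`TV(g)` (Jordan), it suffices to treat a monotone `p`. By the layer-cake formula and Fubini,
`∫_a^b (p - p(a)) h` is the integral over `y ∈ (p(a), p(b)]` of the integrals of `h` over the
superlevel sets `{p > y} ∩ (a, b]`; each of these is an interval `(c, b]` up to a null set, so
the inner integral is `G(b) - G(c)`, within `sup |G|` of `G(b)`.
-/

theorem BoundedVariationOn.exists_monotone_sub_monotone {α : Type*} [LinearOrder α]
    {g : α → ℝ} {a b : α} (hab : a ≤ b) (hg : BoundedVariationOn g (Icc a b)) :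
    ∃ p q : α → ℝ, Monotone p ∧ Monotone q ∧ EqOn g (p - q) (Icc a b) ∧
      p b - p a + (q b - q a) = (eVariationOn g (Icc a b)).toReal := by
  have ha : a ∈ Icc a b := left_mem_Icc.2 hab
  have hb : b ∈ Icc a b := right_mem_Icc.2 hab
  have hg' := hg.locallyBoundedVariationOn
  set v := variationOnFromTo g (Icc a b) a
  have hvb : v b = (eVariationOn g (Icc a b)).toReal := by
    simp only [v, variationOnFromTo.eq_of_le _ _ hab, inter_self]
  refine ⟨fun x => IccExtend hab (fun y : Icc a b => (v + g) y) x / 2,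
    fun x => IccExtend hab (fun y : Icc a b => (v - g) y) x / 2,
    ((monotoneOn_iff_monotone.1 (variationOnFromTo.add_self_monotoneOn hg' ha)).IccExtend
      hab).div_const two_pos.le,
    ((monotoneOn_iff_monotone.1 (variationOnFromTo.sub_self_monotoneOn hg' ha)).IccExtend
      hab).div_const two_pos.le,
    fun x hx => ?_, ?_⟩
  · simp only [Pi.sub_apply, Pi.add_apply, IccExtend_of_mem hab _ hx]
    ring
  · simp only [Pi.sub_apply, Pi.add_apply, IccExtend_of_mem hab _ ha, IccExtend_of_mem hab _ hb,
      v, variationOnFromTo.self] at hvb ⊢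
    linarith

theorem IsUpperSet.exists_Ioc_inter_ae_eq {U : Set ℝ} (hU : IsUpperSet U) {a b : ℝ}
    (hab : a ≤ b) : ∃ c ∈ Icc a b, (Ioc a b ∩ U : Set ℝ) =ᵐ[volume] Ioc c b := by
  set S := Ioc a b ∩ U
  rcases S.eq_empty_or_nonempty with hS | hS
  · exact ⟨b, ⟨hab, le_rfl⟩, by rw [hS, Ioc_self]; rfl⟩
  have hbdd : BddBelow S := ⟨a, fun x hx => hx.1.1.le⟩
  refine ⟨sInf S, ⟨le_csInf hS fun x hx => hx.1.1.le, ?_⟩, ?_⟩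
  · obtain ⟨x, hx⟩ := hS
    exact (csInf_le hbdd hx).trans hx.1.2
  have hsub : Ioc (sInf S) b ⊆ S := fun x hx => by
    obtain ⟨u, hu, hux⟩ := exists_lt_of_csInf_lt hS hx.1
    exact ⟨⟨hu.1.1.trans hux, hx.2⟩, hU hux.le hu.2⟩
  have hsup : S ⊆ Icc (sInf S) b := fun x hx => ⟨csInf_le hbdd hx, hx.1.2⟩
  refine (ae_eq_of_subset_of_measure_ge hsub ?_ measurableSet_Ioc.nullMeasurableSet
    ((measure_mono inter_subset_left).trans_lt measure_Ioc_lt_top).ne).symm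
  exact (measure_mono hsup).trans_eq (Real.volume_Icc.trans Real.volume_Ioc.symm)

section IntegrationByParts

variable {g p h G : ℝ → ℝ} {a b D : ℝ}

theorem Monotone.integrableOn_mul (hp : Monotone p) (hh : IntegrableOn h (Ioc a b)) :
    IntegrableOn (fun s => p s * h s) (Ioc a b) :=
  hh.bdd_mul hp.measurable.aestronglyMeasurable (ae_restrict_of_forall_mem measurableSet_Ioc
    fun _ hs => abs_le_max_abs_abs (hp hs.1.le) (hp hs.2))

theorem Monotone.integrable_indicator_superlevel_prod (hp : Monotone p)
    (hh : IntegrableOn h (Ioc a b)) (c e : ℝ) :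
    Integrable (fun q : ℝ × ℝ => {q : ℝ × ℝ | q.2 < p q.1}.indicator (fun q => h q.1) q)
      ((volume.restrict (Ioc a b)).prod (volume.restrict (Ioc c e))) :=
  (hh.comp_fst _).indicator (measurableSet_lt measurable_snd (hp.measurable.comp measurable_fst))

theorem Monotone.integrableOn_setIntegral_superlevel (hp : Monotone p)
    (hh : IntegrableOn h (Ioc a b)) (c e : ℝ) :
    IntegrableOn (fun y => ∫ s in Ioc a b ∩ {s | y < p s}, h s) (Ioc c e) := by
  refine (hp.integrable_indicator_superlevel_prod hh c e).integral_prod_right.congr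
    (ae_of_all _ fun y => ?_)
  change _ = ∫ s in Ioc a b ∩ p ⁻¹' Ioi y, h s
  rw [← setIntegral_indicator (hp.measurable measurableSet_Ioi)]
  rfl

theorem Monotone.setIntegral_Ioc_sub_mul_eq (hp : Monotone p) (hh : IntegrableOn h (Ioc a b)) :
    ∫ s in Ioc a b, (p s - p a) * h s =
      ∫ y in Ioc (p a) (p b), ∫ s in Ioc a b ∩ {s | y < p s}, h s := by
  set E := {q : ℝ × ℝ | q.2 < p q.1}
  calc ∫ s in Ioc a b, (p s - p a) * h s
      = ∫ s in Ioc a b, ∫ y in Ioc (p a) (p b), E.indicator (fun q => h q.1) (s, y) := by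
        refine setIntegral_congr_fun measurableSet_Ioc fun s hs => ?_
        have hslice : Ioc (p a) (p b) ∩ Iio (p s) = Ioo (p a) (p s) := by
          ext y
          simp only [mem_inter_iff, mem_Ioc, mem_Iio, mem_Ioo]
          exact ⟨fun hy => ⟨hy.1.1, hy.2⟩,
            fun hy => ⟨⟨hy.1, hy.2.le.trans (hp hs.2)⟩, hy.2⟩⟩
        change _ = ∫ y in Ioc (p a) (p b), (Iio (p s)).indicator (fun _ => h s) y
        rw [setIntegral_indicator measurableSet_Iio, setIntegral_const, hslice,
          Real.volume_real_Ioo_of_le (hp hs.1.le), smul_eq_mul]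
    _ = ∫ y in Ioc (p a) (p b), ∫ s in Ioc a b, E.indicator (fun q => h q.1) (s, y) :=
        integral_integral_swap (hp.integrable_indicator_superlevel_prod hh _ _)
    _ = ∫ y in Ioc (p a) (p b), ∫ s in Ioc a b ∩ {s | y < p s}, h s := by
        refine integral_congr_ae (ae_of_all _ fun y => ?_)
        change _ = ∫ s in Ioc a b ∩ p ⁻¹' Ioi y, h s
        rw [← setIntegral_indicator (hp.measurable measurableSet_Ioi)]
        rfl

theorem Monotone.abs_setIntegral_Ioc_mul_sub_le (hp : Monotone p) (hab : a ≤ b)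
    (hh : IntegrableOn h (Ioc a b)) (hG : ∀ x ∈ Icc a b, ∫ s in Ioc x b, h s = G b - G x)
    (hGD : ∀ x ∈ Icc a b, |G x| ≤ D) :
    |(∫ s in Ioc a b, p s * h s) - (p b * G b - p a * G a)| ≤ (p b - p a) * D := by
  have hslice : ∀ y, |(∫ s in Ioc a b ∩ {s | y < p s}, h s) - G b| ≤ D := by
    intro y
    have hU : IsUpperSet {s | y < p s} := fun _ _ hxx' hx => hx.trans_le (hp hxx')
    obtain ⟨c, hc, hae⟩ := hU.exists_Ioc_inter_ae_eq hab
    rw [setIntegral_congr_set hae, hG c hc, sub_sub_cancel_left, abs_neg]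
    exact hGD c hc
  have hsplit : ∫ s in Ioc a b, (p s - p a) * h s =
      (∫ s in Ioc a b, p s * h s) - p a * ∫ s in Ioc a b, h s := by
    rw [← integral_const_mul, ← integral_sub (hp.integrableOn_mul hh) (hh.const_mul (p a))]
    exact integral_congr_ae (ae_of_all _ fun s => sub_mul _ _ _)
  have hmass : ∫ _ in Ioc (p a) (p b), G b = (p b - p a) * G b := by
    rw [setIntegral_const, Real.volume_real_Ioc_of_le (hp hab), smul_eq_mul]
  calc |(∫ s in Ioc a b, p s * h s) - (p b * G b - p a * G a)|
      = |∫ y in Ioc (p a) (p b), ((∫ s in Ioc a b ∩ {s | y < p s}, h s) - G b)| := by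
        rw [integral_sub (hp.integrableOn_setIntegral_superlevel hh _ _) (integrable_const _),
          hmass, ← hp.setIntegral_Ioc_sub_mul_eq hh, hsplit, hG a ⟨le_rfl, hab⟩]
        congr 1; ring
    _ ≤ D * volume.real (Ioc (p a) (p b)) := by
        rw [← Real.norm_eq_abs]
        exact norm_setIntegral_le_of_norm_le_const measure_Ioc_lt_top fun y _ => hslice y
    _ = (p b - p a) * D := by rw [Real.volume_real_Ioc_of_le (hp hab), mul_comm]

theorem BoundedVariationOn.abs_setIntegral_Ioc_mul_sub_le
    (hab : a ≤ b) (hg : BoundedVariationOn g (Icc a b)) (hh : IntegrableOn h (Ioc a b))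
    (hG : ∀ x ∈ Icc a b, ∫ s in Ioc x b, h s = G b - G x)
    (hGD : ∀ x ∈ Icc a b, |G x| ≤ D) :
    |(∫ s in Ioc a b, g s * h s) - (g b * G b - g a * G a)| ≤
      (eVariationOn g (Icc a b)).toReal * D := by
  obtain ⟨p, q, hp, hq, hgpq, hvar⟩ := hg.exists_monotone_sub_monotone hab
  have hsplit : ∫ s in Ioc a b, g s * h s =
      (∫ s in Ioc a b, p s * h s) - ∫ s in Ioc a b, q s * h s := by
    rw [← integral_sub (hp.integrableOn_mul hh) (hq.integrableOn_mul hh)]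
    refine setIntegral_congr_fun measurableSet_Ioc fun s hs => ?_
    rw [hgpq (Ioc_subset_Icc_self hs), Pi.sub_apply, sub_mul]
  calc |(∫ s in Ioc a b, g s * h s) - (g b * G b - g a * G a)|
      = |((∫ s in Ioc a b, p s * h s) - (p b * G b - p a * G a)) -
          ((∫ s in Ioc a b, q s * h s) - (q b * G b - q a * G a))| := by
        rw [hsplit, hgpq (left_mem_Icc.2 hab), hgpq (right_mem_Icc.2 hab), Pi.sub_apply,
          Pi.sub_apply]
        congr 1; ring
    _ ≤ (p b - p a) * D + (q b - q a) * D :=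
        (abs_sub _ _).trans (add_le_add (hp.abs_setIntegral_Ioc_mul_sub_le hab hh hG hGD)
          (hq.abs_setIntegral_Ioc_mul_sub_le hab hh hG hGD))
    _ = (eVariationOn g (Icc a b)).toReal * D := by rw [← hvar]; ring

theorem BoundedVariationOn.abs_setIntegral_Ioc_mul_le
    (hab : a ≤ b) (hg : BoundedVariationOn g (Icc a b)) (hh : IntegrableOn h (Ioc a b))
    (hG : ∀ x ∈ Icc a b, ∫ s in Ioc x b, h s = G b - G x)
    (hGD : ∀ x ∈ Icc a b, |G x| ≤ D) :
    |∫ s in Ioc a b, g s * h s| ≤ (|g a| + |g b| + (eVariationOn g (Icc a b)).toReal) * D := by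
  have hGa := hGD a (left_mem_Icc.2 hab)
  have hGb := hGD b (right_mem_Icc.2 hab)
  have hboundary : |g b * G b - g a * G a| ≤ |g b| * D + |g a| * D := by
    calc |g b * G b - g a * G a| ≤ |g b * G b| + |g a * G a| := abs_sub _ _
      _ ≤ |g b| * D + |g a| * D := by
        rw [abs_mul, abs_mul]
        exact add_le_add (mul_le_mul_of_nonneg_left hGb (abs_nonneg _))
          (mul_le_mul_of_nonneg_left hGa (abs_nonneg _))
  calc |∫ s in Ioc a b, g s * h s|
      ≤ |(∫ s in Ioc a b, g s * h s) - (g b * G b - g a * G a)| + |g b * G b - g a * G a| :=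
        sub_le_iff_le_add.1 (abs_sub_abs_le_abs_sub _ _)
    _ ≤ (eVariationOn g (Icc a b)).toReal * D + (|g b| * D + |g a| * D) :=
        add_le_add (hg.abs_setIntegral_Ioc_mul_sub_le hab hh hG hGD) hboundary
    _ = (|g a| + |g b| + (eVariationOn g (Icc a b)).toReal) * D := by ring

end IntegrationByParts

section Kernel

variable {d : ℕ} {T : ℝ} {K : ℝ → Fin d → ℝ}

theorem IsMKernel.mem_Icc (hK : IsMKernel d T K) {s : ℝ} (hs : s ∈ Icc 0 T) (i : Fin d) :
    K s i ∈ Icc 0 1 :=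
  ⟨(hK.2 s hs).1 i, (hK.2 s hs).2 ▸
    Finset.single_le_sum (fun j _ => (hK.2 s hs).1 j) (Finset.mem_univ i)⟩

theorem IsMKernel.integrableOn (hK : IsMKernel d T K) (i : Fin d) :
    IntegrableOn (fun s => K s i) (Icc 0 T) :=
  Measure.integrableOn_of_bounded (M := 1) measure_Icc_lt_top.ne (hK.1 i).aestronglyMeasurable
    (ae_restrict_of_forall_mem measurableSet_Icc fun _ hs => by
      rw [Real.norm_eq_abs, abs_le]
      exact ⟨(neg_nonpos.2 zero_le_one).trans (hK.mem_Icc hs i).1, (hK.mem_Icc hs i).2⟩)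

theorem IsMKernel.intervalIntegrable (hK : IsMKernel d T K) (i : Fin d) {x y : ℝ}
    (hx : x ∈ Icc 0 T) (hy : y ∈ Icc 0 T) :
    IntervalIntegrable (fun s => K s i) volume x y :=
  ((hK.integrableOn i).mono_set (uIcc_subset_Icc hx hy)).intervalIntegrable

end Kernel

theorem integral_kernel_diff_bound_BV_general (d : ℕ) (T : ℝ)
    (t₁ t₂ : ℝ) (ht₁ : 0 ≤ t₁) (ht₁₂ : t₁ ≤ t₂) (ht₂ : t₂ ≤ T)
    (f : ℝ → Fin d → ℝ)
    (hfBV : ∀ i : Fin d, BoundedVariationOn (fun s => f s i) (Set.Icc t₁ t₂))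
    (μ ν : C(Set.Icc (0:ℝ) T, Fin d → ℝ)) (Kμ Kν : ℝ → Fin d → ℝ)
    (hKμ : IsMKernel d T Kμ) (hKν : IsMKernel d T Kν)
    (hμ : ∀ t : Set.Icc (0:ℝ) T, ∀ i : Fin d, μ t i = ∫ s in (0:ℝ)..(t:ℝ), Kμ s i)
    (hν : ∀ t : Set.Icc (0:ℝ) T, ∀ i : Fin d, ν t i = ∫ s in (0:ℝ)..(t:ℝ), Kν s i) :
    ∀ i : Fin d,
      |∫ s in t₁..t₂, f s i * (Kμ s i - Kν s i)| ≤
        (|f t₁ i| + |f t₂ i| +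
          (eVariationOn (fun s => f s i) (Set.Icc t₁ t₂)).toReal) * dist μ ν := by
  intro i
  have hsub : Icc t₁ t₂ ⊆ Icc 0 T := Icc_subset_Icc ht₁ ht₂
  have h0 : (0:ℝ) ∈ Icc 0 T := ⟨le_rfl, ht₁.trans (ht₁₂.trans ht₂)⟩
  have hKμ0 x (hx : x ∈ Icc 0 T) := hKμ.intervalIntegrable i h0 hx
  have hKν0 x (hx : x ∈ Icc 0 T) := hKν.intervalIntegrable i h0 hx
  have hG : ∀ x ∈ Icc t₁ t₂, ∫ s in Ioc x t₂, (Kμ s i - Kν s i) =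
      (∫ s in (0:ℝ)..t₂, (Kμ s i - Kν s i)) - ∫ s in (0:ℝ)..x, (Kμ s i - Kν s i) := by
    intro x hx
    have ht₂' : t₂ ∈ Icc 0 T := hsub (right_mem_Icc.2 ht₁₂)
    rw [intervalIntegral.integral_interval_sub_left ((hKμ0 t₂ ht₂').sub (hKν0 t₂ ht₂'))
      ((hKμ0 x (hsub hx)).sub (hKν0 x (hsub hx))), intervalIntegral.integral_of_le hx.2]
  have hGD : ∀ x ∈ Icc t₁ t₂,
      |∫ s in (0:ℝ)..x, (Kμ s i - Kν s i)| ≤ dist μ ν := by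
    intro x hx
    have hx' := hsub hx
    rw [intervalIntegral.integral_sub (hKμ0 x hx') (hKν0 x hx'), ← hμ ⟨x, hx'⟩ i,
      ← hν ⟨x, hx'⟩ i, ← Real.dist_eq]
    exact (dist_le_pi_dist _ _ i).trans (ContinuousMap.dist_apply_le_dist _)
  have hint : IntegrableOn (fun s => Kμ s i - Kν s i) (Ioc t₁ t₂) :=
    ((hKμ.integrableOn i).sub (hKν.integrableOn i)).mono_set (Ioc_subset_Icc_self.trans hsub)
  rw [intervalIntegral.integral_of_le ht₁₂]
  exact (hfBV i).abs_setIntegral_Ioc_mul_le ht₁₂ hint hG hGD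

/-- For `f(·,i)` continuous on `[0,T]` and of bounded variation on `[t₁,t₂]`, for all
`μ, ν ∈ 𝕄_T` (with kernels `K_μ, K_ν`) and every `i`,
`|∫_{t₁}^{t₂} f(s,i)(K_μ(s,i) − K_ν(s,i)) ds|
  ≤ (|f(t₁,i)| + |f(t₂,i)| + TV(f(·,i);[t₁,t₂]))·d_T(μ,ν)`,
where `d_T` is the supremum distance on `C([0,T], ℝ^d)` and `TV` the total variation. -/
theorem integral_kernel_diff_bound_BV (d : ℕ) (hd : 1 ≤ d) (T : ℝ) (hT : 0 < T)
    (t₁ t₂ : ℝ) (ht₁ : 0 ≤ t₁) (ht₁₂ : t₁ ≤ t₂) (ht₂ : t₂ ≤ T)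
    (f : ℝ → Fin d → ℝ)
    (hfc : ∀ i : Fin d, ContinuousOn (fun s => f s i) (Set.Icc (0:ℝ) T))
    (hfBV : ∀ i : Fin d, BoundedVariationOn (fun s => f s i) (Set.Icc t₁ t₂))
    (μ ν : C(Set.Icc (0:ℝ) T, Fin d → ℝ)) (Kμ Kν : ℝ → Fin d → ℝ)
    (hKμ : IsMKernel d T Kμ) (hKν : IsMKernel d T Kν)
    (hμ : ∀ t : Set.Icc (0:ℝ) T, ∀ i : Fin d, μ t i = ∫ s in (0:ℝ)..(t:ℝ), Kμ s i)
    (hν : ∀ t : Set.Icc (0:ℝ) T, ∀ i : Fin d, ν t i = ∫ s in (0:ℝ)..(t:ℝ), Kν s i) :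
    ∀ i : Fin d,
      |∫ s in t₁..t₂, f s i * (Kμ s i - Kν s i)| ≤
        (|f t₁ i| + |f t₂ i| +
          (eVariationOn (fun s => f s i) (Set.Icc t₁ t₂)).toReal) * dist μ ν :=
  integral_kernel_diff_bound_BV_general d T t₁ t₂ ht₁ ht₁₂ ht₂ f hfBV μ ν Kμ Kν hKμ hKν hμ hν
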